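/- arXiv:1408.2579 — 4 statements merged into one kernel-verified Lean document; each statement's English description precedes it below -/
import Mathlib

section
/- Let F be a field of characteristic not 2 and let q be a quadratic form over F of dimension m with diagonalization ⟨a₁,…,a_m⟩, and let λ ∈ F×. Then the Hasse invariant satisfies c(λq) = (λ, (−1)^{m(m−1)/2} (det q)^{m−1}) · c(q), where (·,·) denotes the Hilbert symbol (class of the quaternion algebra) over F and c(q) = ∏_{i<j} (a_i, a_j). -/
/-!
Bilinearity and symmetry give `(λa, λb) = (λ, λ) (λ, ab) (a, b)`, and `(λ, -λ) = 1` turns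
`(λ, λ)` into `(λ, -1)`. Taking the product over the `m(m-1)/2` pairs `i < j`, in which each
`aᵢ` occurs `m - 1` times, the correction factor is `(λ, (-1)^{m(m-1)/2} (∏ aᵢ)^{m-1})`.
-/

open Finset

/-- The Hasse invariant of a diagonal quadratic form `⟨a₁,…,a_m⟩`:
`c(q) = ∏_{i<j} (aᵢ, aⱼ)`, where `h` is the Hilbert symbol with values in a
commutative group `B` (e.g. the Brauer group, or `{±1}` over a local field). -/
noncomputable def hasseInv {F B : Type*} [Field F] [CommGroup B]
    (h : Fˣ → Fˣ → B) {m : ℕ} (a : Fin m → Fˣ) : B :=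
  ∏ p ∈ Finset.univ.filter (fun p : Fin m × Fin m => p.1 < p.2), h (a p.1) (a p.2)

section PairProducts

variable {α M : Type*} [LinearOrder α] [Fintype α] [LocallyFiniteOrderTop α] [CommMonoid M]

@[to_additive]
theorem prod_filter_fst_lt_snd (f : α → α → M) :
    ∏ p ∈ univ.filter (fun p : α × α => p.1 < p.2), f p.1 p.2 =
      ∏ i, ∏ j ∈ Ioi i, f i j := by
  rw [prod_sigma']
  refine prod_nbij' (fun p => ⟨p.1, p.2⟩) (fun p => (p.1, p.2)) ?_ ?_ ?_ ?_ ?_ <;> simp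

theorem prod_filter_fst_lt_snd_mul [LocallyFiniteOrderBot α] (f : α → M) :
    ∏ p ∈ univ.filter (fun p : α × α => p.1 < p.2), f p.1 * f p.2 =
      (∏ i, f i) ^ (Fintype.card α - 1) := by
  rw [prod_filter_fst_lt_snd (fun i j => f i * f j),
    prod_prod_Ioi_mul_eq_prod_prod_off_diag (fun _ j => f j), ← prod_pow]
  simp only [prod_const, card_compl, card_singleton]

end PairProducts

theorem Fin.card_filter_fst_lt_snd (m : ℕ) :
    #(univ.filter fun p : Fin m × Fin m => p.1 < p.2) = m * (m - 1) / 2 := by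
  rw [card_eq_sum_ones, sum_filter_fst_lt_snd (fun _ _ => 1)]
  simp only [← card_eq_sum_ones, Fin.card_Ioi]
  rw [Fin.sum_univ_eq_sum_range (fun i => m - 1 - i), ← sum_range_reflect, ← sum_range_id]
  exact sum_congr rfl fun i hi => by rw [mem_range] at hi; omega

section HilbertSymbol

variable {A B : Type*} [Monoid A] [CommGroup B] {h : A → A → B}

theorem hilbert_mul_right (hsymm : ∀ a b, h a b = h b a)
    (hmul : ∀ a b c, h (a * b) c = h a c * h b c) (a b c : A) :
    h a (b * c) = h a b * h a c := by
  rw [hsymm, hmul, hsymm b, hsymm c]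

variable [HasDistribNeg A]

theorem hilbert_self (hsymm : ∀ a b, h a b = h b a)
    (hmul : ∀ a b c, h (a * b) c = h a c * h b c) (hneg : ∀ a, h a (-a) = 1) (a : A) :
    h a a = h a (-1) := by
  have h_one : h a 1 = 1 := by
    simpa using hilbert_mul_right hsymm hmul a 1 1
  have h_neg_one_sq : h a (-1) * h a (-1) = 1 := by
    rw [← hilbert_mul_right hsymm hmul, neg_one_mul, neg_neg, h_one]
  have h_neg_one_mul_self : h a (-1) * h a a = 1 := by
    rw [← hilbert_mul_right hsymm hmul, neg_one_mul, hneg]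
  exact mul_left_cancel (h_neg_one_mul_self.trans h_neg_one_sq.symm)

theorem hilbert_mul_mul (hsymm : ∀ a b, h a b = h b a)
    (hmul : ∀ a b c, h (a * b) c = h a c * h b c) (hneg : ∀ a, h a (-a) = 1) (l a b : A) :
    h (l * a) (l * b) = h l (-1) * h l (a * b) * h a b := by
  rw [hmul, hilbert_mul_right hsymm hmul, hilbert_mul_right hsymm hmul,
    hilbert_mul_right hsymm hmul, hilbert_self hsymm hmul hneg, hsymm a l]
  ac_rfl

end HilbertSymbol

theorem hasse_of_scaled_form_general
    {F B : Type*} [Field F] [CommGroup B]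
    (h : Fˣ → Fˣ → B)
    (hsymm : ∀ a b : Fˣ, h a b = h b a)
    (hmul : ∀ a b c : Fˣ, h (a * b) c = h a c * h b c)
    (hneg : ∀ a : Fˣ, h a (-a) = 1)
    (m : ℕ) (a : Fin m → Fˣ) (l : Fˣ) :
    hasseInv h (fun i => l * a i) =
      h l ((-1) ^ (m * (m - 1) / 2) * (∏ i, a i) ^ (m - 1)) * hasseInv h a := by
  let φ : Fˣ →* B := MonoidHom.mk' (h l) (hilbert_mul_right hsymm hmul l)
  calc hasseInv h (fun i => l * a i)
      = ∏ p ∈ univ.filter (fun p : Fin m × Fin m => p.1 < p.2),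
          φ (-1) * φ (a p.1 * a p.2) * h (a p.1) (a p.2) :=
        prod_congr rfl fun p _ => hilbert_mul_mul hsymm hmul hneg l _ _
    _ = φ ((-1) ^ (m * (m - 1) / 2)) * φ ((∏ i, a i) ^ (m - 1)) * hasseInv h a := by
        rw [prod_mul_distrib, prod_mul_distrib, prod_const, ← map_prod,
          prod_filter_fst_lt_snd_mul, Fin.card_filter_fst_lt_snd, Fintype.card_fin,
          map_pow, map_pow]
        rfl
    _ = h l ((-1) ^ (m * (m - 1) / 2) * (∏ i, a i) ^ (m - 1)) * hasseInv h a := by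
        rw [← map_mul]
        rfl

/-- For a diagonal quadratic form `q = ⟨a₁,…,a_m⟩` over a field `F` of
characteristic not 2 and `λ ∈ F×`,
`c(λq) = (λ, (−1)^{m(m−1)/2} (det q)^{m−1}) · c(q)`,
where `(·,·)` is the Hilbert symbol (defined up to square class, symmetric,
multiplicative, and with `(a, −a) = 1`). -/
theorem hasse_of_scaled_form
    {F B : Type*} [Field F] [CommGroup B] (hchar : (2 : F) ≠ 0)
    (h : Fˣ → Fˣ → B)
    (hsq : ∀ a b c : Fˣ, h a (b * c ^ 2) = h a b)
    (hsymm : ∀ a b : Fˣ, h a b = h b a)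
    (hmul : ∀ a b c : Fˣ, h (a * b) c = h a c * h b c)
    (hneg : ∀ a : Fˣ, h a (-a) = 1)
    (m : ℕ) (a : Fin m → Fˣ) (l : Fˣ) :
    hasseInv h (fun i => l * a i) =
      h l ((-1) ^ (m * (m - 1) / 2) * (∏ i, a i) ^ (m - 1)) * hasseInv h a :=
  hasse_of_scaled_form_general h hsymm hmul hneg m a l
end

section
/- Let q₁ and q₂ be nonisometric nondegenerate quadratic forms over ℝ of equal dimension m, with signatures (m₁,n₁) and (m₂,n₂) respectively, satisfying m₁ > m₂ ≥ n₂ > n₁. Then for every integer j with n₁ + n₂ < j < m, there exists a j-dimensional subform r of q₂ (obtained by deleting m−j entries of a diagonalization of q₂) such that r is isotropic and neither r nor −r is isometric to a subform of q₁. -/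
/- Nondegenerate quadratic forms over ℝ are classified up to isometry by their signature
`(p, n)` (numbers of positive and negative squares in a diagonalization). We identify a
real form with its signature. -/

/-- `r` is (isometric to) a subform of `q`: `q ≅ r ⊕ t` for some form `t`. -/
def IsSubformSig (r q : ℕ × ℕ) : Prop := r.1 ≤ q.1 ∧ r.2 ≤ q.2

/-- A real form is isotropic iff both entries of its signature are positive. -/
def IsIsotropicSig (r : ℕ × ℕ) : Prop := 0 < r.1 ∧ 0 < r.2

/-- The negative `−r` of a real form of signature `r`. -/
def negSig (r : ℕ × ℕ) : ℕ × ℕ := (r.2, r.1)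

/-- if `q₁`, `q₂` are nonisometric real forms of dimension `m` with
signatures `(m₁,n₁)`, `(m₂,n₂)` satisfying `m₁ > m₂ ≥ n₂ > n₁`, then for every `j` with
`n₁ + n₂ < j < m` there is an isotropic `j`-dimensional subform `r` of `q₂` such that
neither `r` nor `−r` is isometric to a subform of `q₁`. -/
theorem real_subform_not_in_other_low
    (m m₁ n₁ m₂ n₂ : ℕ)
    (hd₁ : m₁ + n₁ = m) (hd₂ : m₂ + n₂ = m)
    (hne : (m₁, n₁) ≠ (m₂, n₂))
    (h₁ : m₁ > m₂) (h₂ : m₂ ≥ n₂) (h₃ : n₂ > n₁)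
    (j : ℕ) (hj₁ : n₁ + n₂ < j) (hj₂ : j < m) :
    ∃ r : ℕ × ℕ, r.1 + r.2 = j ∧ IsSubformSig r (m₂, n₂) ∧ IsIsotropicSig r ∧
      ¬ IsSubformSig r (m₁, n₁) ∧ ¬ IsSubformSig (negSig r) (m₁, n₁) := by
  refine ⟨(j - n₂, n₂), by simp; omega, ⟨by simp; omega, le_refl _⟩, ⟨by simp; omega, by omega⟩,
    fun h => ?_, fun h => ?_⟩
  · exact absurd h.2 (by simp; omega)
  · exact absurd h.2 (by simp [negSig]; omega)
end

section
/- Let q₁ and q₂ be nonisometric nondegenerate quadratic forms over ℝ of equal dimension m, with signatures (m₁,n₁) and (m₂,n₂) satisfying m₁ > m₂ ≥ n₂ > n₁ > 0. Then for every integer j with m₁ < j < m, there exists an isotropic j-dimensional subform r of q₁ such that neither r nor −r is isometric to a subform of q₂. -/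
/-- if `q₁`, `q₂` are nonisometric real forms of dimension `m` with
signatures `(m₁,n₁)`, `(m₂,n₂)` satisfying `m₁ > m₂ ≥ n₂ > n₁ > 0`, then for every `j`
with `m₁ < j < m` there is an isotropic `j`-dimensional subform `r` of `q₁` such that
neither `r` nor `−r` is isometric to a subform of `q₂`. -/
theorem real_subform_not_in_other_high
    (m m₁ n₁ m₂ n₂ : ℕ)
    (hd₁ : m₁ + n₁ = m) (hd₂ : m₂ + n₂ = m)
    (hne : (m₁, n₁) ≠ (m₂, n₂))
    (h₁ : m₁ > m₂) (h₂ : m₂ ≥ n₂) (h₃ : n₂ > n₁) (h₄ : n₁ > 0)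
    (j : ℕ) (hj₁ : m₁ < j) (hj₂ : j < m) :
    ∃ r : ℕ × ℕ, r.1 + r.2 = j ∧ IsSubformSig r (m₁, n₁) ∧ IsIsotropicSig r ∧
      ¬ IsSubformSig r (m₂, n₂) ∧ ¬ IsSubformSig (negSig r) (m₂, n₂) := by
  refine ⟨(m₁, j - m₁), ?_, ⟨le_refl _, ?_⟩, ⟨?_, ?_⟩, ?_, ?_⟩ <;>
    simp [IsSubformSig, IsIsotropicSig, negSig] <;> omega
end

section
/- Let q₁ and q₂ be nondegenerate quadratic forms over ℝ of dimension m ≥ 5 that are not similar (not isometric up to a nonzero real scalar). Then there exists an isotropic (m−1)-dimensional subform of one of them that is not similar to any subform of the other; moreover this subform can be realized by deleting one entry in a diagonal representation of q₁ or of q₂. -/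
/-- if `q₁`, `q₂` are nondegenerate real quadratic forms of dimension
`m ≥ 5` that are not similar, then one of them has an isotropic `(m−1)`-dimensional
subform (obtained by deleting one diagonal entry) that is not similar to any subform of
the other. -/
theorem real_codim_one_subform_dichotomy
    (m m₁ n₁ m₂ n₂ : ℕ) (hm : 5 ≤ m)
    (hd₁ : m₁ + n₁ = m) (hd₂ : m₂ + n₂ = m)
    (hnsim : ¬ ((m₁, n₁) = (m₂, n₂) ∨ (m₁, n₁) = negSig (m₂, n₂))) :
    ∃ r : ℕ × ℕ, r.1 + r.2 = m - 1 ∧ IsIsotropicSig r ∧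
      ((IsSubformSig r (m₁, n₁) ∧
          ¬ IsSubformSig r (m₂, n₂) ∧ ¬ IsSubformSig (negSig r) (m₂, n₂)) ∨
       (IsSubformSig r (m₂, n₂) ∧
          ¬ IsSubformSig r (m₁, n₁) ∧ ¬ IsSubformSig (negSig r) (m₁, n₁))) := by
  simp only [negSig, Prod.mk.injEq, not_or, not_and] at hnsim
  have key :
      (2 ≤ m₁ ∧ 1 ≤ n₁ ∧ ¬(m₁-1 ≤ m₂ ∧ n₁ ≤ n₂) ∧ ¬(n₁ ≤ m₂ ∧ m₁-1 ≤ n₂)) ∨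
      (1 ≤ m₁ ∧ 2 ≤ n₁ ∧ ¬(m₁ ≤ m₂ ∧ n₁-1 ≤ n₂) ∧ ¬(n₁-1 ≤ m₂ ∧ m₁ ≤ n₂)) ∨
      (2 ≤ m₂ ∧ 1 ≤ n₂ ∧ ¬(m₂-1 ≤ m₁ ∧ n₂ ≤ n₁) ∧ ¬(n₂ ≤ m₁ ∧ m₂-1 ≤ n₁)) ∨
      (1 ≤ m₂ ∧ 2 ≤ n₂ ∧ ¬(m₂ ≤ m₁ ∧ n₂-1 ≤ n₁) ∧ ¬(n₂-1 ≤ m₁ ∧ m₂ ≤ n₁)) := by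
    omega
  rcases key with h | h | h | h
  · refine ⟨(m₁ - 1, n₁), ?_⟩
    simp only [IsSubformSig, IsIsotropicSig, negSig, not_and, not_le]
    omega
  · refine ⟨(m₁, n₁ - 1), ?_⟩
    simp only [IsSubformSig, IsIsotropicSig, negSig, not_and, not_le]
    omega
  · refine ⟨(m₂ - 1, n₂), ?_⟩
    simp only [IsSubformSig, IsIsotropicSig, negSig, not_and, not_le]
    omega
  · refine ⟨(m₂, n₂ - 1), ?_⟩
    simp only [IsSubformSig, IsIsotropicSig, negSig, not_and, not_le]
    omega
end
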